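/- arXiv:1809.10881 — 3 statements merged into one kernel-verified Lean document; each statement's English description precedes it below -/
import Mathlib

section
/- Let X be a proper geodesic δ-hyperbolic space and Γ a group acting properly by isometries on X. For every nonempty compact subset K ⊆ X, the complement of the K-radial limit set in the Gromov boundary is contained in the Γ-orbit of L_K: ∂X \ Λ_rad^K ⊆ Γ·L_K. -/
open Filter Topology Metric Set MeasureTheory Pointwise
open scoped symmDiff ENNReal NNReal

noncomputable section

namespace SPR

variable {X : Type} [MetricSpace X]

/-- The Gromov product of `x` and `y` seen from `z`. -/
def gromovProd (x y z : X) : ℝ := (dist x z + dist y z - dist x y) / 2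

/-- `X` is `δ`-hyperbolic: the four point inequality holds. -/
def GromovHyperbolicWith (δ : ℝ) (X : Type) [MetricSpace X] : Prop :=
  ∀ x y z t : X, min (gromovProd x y t) (gromovProd y z t) - δ ≤ gromovProd x z t

/-- `c` parametrizes a geodesic (by arc length) on the set `I` of times. -/
def IsGeodesicOn (c : ℝ → X) (I : Set ℝ) : Prop :=
  ∀ s ∈ I, ∀ t ∈ I, dist (c s) (c t) = |s - t|

/-- Every pair of points of `X` is joined by a geodesic. -/
def GeodesicSpace (X : Type) [MetricSpace X] : Prop :=
  ∀ x y : X, ∃ c : ℝ → X,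
    c 0 = x ∧ c (dist x y) = y ∧ IsGeodesicOn c (Set.Icc 0 (dist x y))

/-- A geodesic ray, parametrized by `[0,∞)`. -/
def IsGeodesicRay (c : ℝ → X) : Prop := IsGeodesicOn c (Set.Ici 0)

/-- The action of `Γ` on `X` is (metrically) proper. -/
def ProperAction (Γ : Type) (X : Type) [Group Γ] [MetricSpace X] [MulAction Γ X] : Prop :=
  ∀ L : Set X, IsCompact L → {γ : Γ | ∃ x ∈ L, γ • x ∈ L}.Finite

variable {Γ : Type} [Group Γ] [MulAction Γ X]

/-- The critical exponent (exponential growth rate) of a subset `S` of `Γ`,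
for the action on `X` with base point `o`. -/
def critExp (o : X) (S : Set Γ) : ℝ :=
  Filter.limsup
    (fun r : ℝ => Real.log (Nat.card {γ : Γ // γ ∈ S ∧ dist o (γ • o) ≤ r}) / r)
    Filter.atTop

/-- The critical exponent `h_Γ` of the whole group. -/
def fullCritExp (Γ : Type) [Group Γ] [MulAction Γ X] (o : X) : ℝ :=
  critExp o (Set.univ : Set Γ)

/-- The set `Γ_K` of elements `γ ∈ Γ` for which there are `x, y ∈ K` and a geodesic
from `x` to `γ y` meeting `Γ ⬝ K` only inside `K ∪ γ K`. -/
def gammaK (Γ : Type) [Group Γ] [MulAction Γ X] (K : Set X) : Set Γ :=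
  {γ : Γ | ∃ x ∈ K, ∃ y ∈ K, ∃ c : ℝ → X,
    c 0 = x ∧ c (dist x (γ • y)) = γ • y ∧ IsGeodesicOn c (Set.Icc 0 (dist x (γ • y))) ∧
    (c '' Set.Icc 0 (dist x (γ • y))) ∩ (⋃ g : Γ, g • K) ⊆ K ∪ γ • K}

/-- The entropy at infinity `h_Γ^∞`. -/
def entropyAtInfinity (Γ : Type) [Group Γ] [MulAction Γ X] (o : X) : ℝ :=
  sInf {h : ℝ | ∃ K : Set X, IsCompact K ∧ h = critExp o (gammaK Γ K)}

/-- The action of `Γ` on `X` is strongly positively recurrent (it has a growth gap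
at infinity). -/
def SPRAction (Γ : Type) [Group Γ] [MulAction Γ X] (o : X) : Prop :=
  entropyAtInfinity Γ o < fullCritExp Γ o

/-! ### The Gromov boundary -/

theorem gromovProd_ge (x y z w : X) :
    gromovProd x y z - dist z w ≤ gromovProd x y w := by
  have h1 : dist x z ≤ dist x w + dist w z := dist_triangle x w z
  have h2 : dist y z ≤ dist y w + dist w z := dist_triangle y w z
  have h3 : dist w z = dist z w := dist_comm w z
  simp only [gromovProd]
  linarith

/-- A sequence converging to infinity. -/
def SeqToInf (o : X) (u : ℕ → X) : Prop :=
  Tendsto (fun p : ℕ × ℕ => gromovProd (u p.1) (u p.2) o) atTop atTop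

/-- Two sequences converging to infinity define the same boundary point. -/
def seqRel (o : X) (u v : {u : ℕ → X // SeqToInf o u}) : Prop :=
  Tendsto (fun n => gromovProd (u.1 n) (v.1 n) o) atTop atTop

/-- The Gromov boundary of `X` (described with base point `o`). -/
def GromovBoundary (o : X) : Type := Quot (seqRel o)

def mkBoundary (o : X) (u : {u : ℕ → X // SeqToInf o u}) : GromovBoundary o :=
  Quot.mk (seqRel o) u

instance (o : X) : TopologicalSpace (GromovBoundary o) :=
  inferInstanceAs (TopologicalSpace (Quot (seqRel o)))

instance (o : X) : MeasurableSpace (GromovBoundary o) := borel (GromovBoundary o)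

/-- A ray `c` ends at the boundary point `ξ`. -/
def endsAt (o : X) (c : ℝ → X) (ξ : GromovBoundary o) : Prop :=
  ∃ h : SeqToInf o (fun n : ℕ => c n), mkBoundary o ⟨fun n : ℕ => c n, h⟩ = ξ

/-- The bordification `X ∪ ∂X` of `X`. -/
def Bord (o : X) : Type := X ⊕ GromovBoundary o

def Bord.ofX (o : X) (x : X) : Bord o := Sum.inl x

def Bord.ofB (o : X) (ξ : GromovBoundary o) : Bord o := Sum.inr ξ

/-- Extension of the Gromov product: a point of `X` and a boundary point,
seen from `base`; infimum over representative sequences of the liminf. -/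
def gpPB (o base x : X) (ξ : GromovBoundary o) : ℝ :=
  sInf {t : ℝ | ∃ u : {u : ℕ → X // SeqToInf o u}, mkBoundary o u = ξ ∧
    t = Filter.liminf (fun n => gromovProd x (u.1 n) base) Filter.atTop}

/-- Extension of the Gromov product to two boundary points, seen from `base`. -/
def gpBB (o base : X) (ξ η : GromovBoundary o) : EReal :=
  sInf {t : EReal | ∃ u v : {u : ℕ → X // SeqToInf o u},
    mkBoundary o u = ξ ∧ mkBoundary o v = η ∧
    t = Filter.liminf (fun n => ((gromovProd (u.1 n) (v.1 n) base : ℝ) : EReal)) Filter.atTop}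

/-- The Gromov product of two points of the bordification `X ∪ ∂X`, seen from `base`. -/
def gpE (o base : X) (p q : X ⊕ GromovBoundary o) : EReal :=
  match p, q with
  | Sum.inl x, Sum.inl y => ((gromovProd x y base : ℝ) : EReal)
  | Sum.inl x, Sum.inr ξ => ((gpPB o base x ξ : ℝ) : EReal)
  | Sum.inr ξ, Sum.inl x => ((gpPB o base x ξ : ℝ) : EReal)
  | Sum.inr ξ, Sum.inr η => gpBB o base ξ η

/-- The topology of the bordification: generated by the open subsets of `X`
together with the sets `{p | ⟨p,ξ⟩_o > T}`. -/
instance (o : X) : TopologicalSpace (Bord o) :=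
  TopologicalSpace.generateFrom
    ({V : Set (Bord o) | ∃ U : Set X, IsOpen U ∧ V = Bord.ofX o '' U} ∪
     {V : Set (Bord o) | ∃ (ξ : GromovBoundary o) (T : ℝ),
        V = {p : Bord o | (T : EReal) < gpE o o p (Bord.ofB o ξ)}})

/-- `c` together with its interval of definition `I` is a geodesic joining
the point `x ∈ X` to the point `p` of the bordification. -/
def JoinsBord (o : X) (c : ℝ → X) (I : Set ℝ) (x : X) (p : Bord o) : Prop :=
  (∃ y : X, p = Bord.ofX o y ∧ I = Set.Icc 0 (dist x y) ∧ c 0 = x ∧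
    c (dist x y) = y ∧ IsGeodesicOn c I) ∨
  (∃ ξ : GromovBoundary o, p = Bord.ofB o ξ ∧ I = Set.Ici 0 ∧ c 0 = x ∧
    IsGeodesicRay c ∧ endsAt o c ξ)

/-- The shadow `O_o(x,r)`: points of `X ∪ ∂X` joined to `o` by a geodesic
meeting the closed ball `B(x,r)`. -/
def shadow (o x : X) (r : ℝ) : Set (Bord o) :=
  {p | ∃ (c : ℝ → X) (I : Set ℝ), JoinsBord o c I o p ∧ ∃ t ∈ I, c t ∈ Metric.closedBall x r}

/-- The `K`-radial limit set. -/
def radialLimitSet (o : X) (Γ : Type) [Group Γ] [MulAction Γ X] (K : Set X) :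
    Set (GromovBoundary o) :=
  {ξ | ∃ c : ℝ → X, IsGeodesicRay c ∧ endsAt o c ξ ∧
    {γ : Γ | ∃ t : ℝ, 0 ≤ t ∧ c t ∈ γ • K}.Infinite}

/-- The radial limit set. -/
def radialLimitSetFull (o : X) (Γ : Type) [Group Γ] [MulAction Γ X] :
    Set (GromovBoundary o) :=
  {ξ | ∃ K : Set X, IsCompact K ∧ ξ ∈ radialLimitSet o Γ K}

/-- The set `𝓛_K` of endpoints of geodesic rays starting in `K` and meeting
`Γ ⬝ K` only inside `K`. -/
def LK (o : X) (Γ : Type) [Group Γ] [MulAction Γ X] (K : Set X) :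
    Set (GromovBoundary o) :=
  {ξ | ∃ c : ℝ → X, IsGeodesicRay c ∧ c 0 ∈ K ∧ endsAt o c ξ ∧
    (c '' Set.Ici 0) ∩ (⋃ g : Γ, g • K) ⊆ K}

/-- The neighbourhood `U_K^T` of `𝓛_K` in the bordification. -/
def UKT (o : X) (Γ : Type) [Group Γ] [MulAction Γ X] (K : Set X) (T : ℝ) :
    Set (Bord o) :=
  {p | ∃ ξ ∈ LK o Γ K, (T : EReal) ≤ gpE o o p (Bord.ofB o ξ)}

/-! ### The boundary action -/

section IsometricAction

variable [IsIsometricSMul Γ X]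

theorem gromovProd_smul (γ : Γ) (x y o : X) :
    gromovProd (γ • x) (γ • y) o = gromovProd x y (γ⁻¹ • o) := by
  have h1 : dist (γ • x) o = dist x (γ⁻¹ • o) := by
    conv_lhs => rw [← smul_inv_smul γ o]
    exact dist_smul γ x (γ⁻¹ • o)
  have h2 : dist (γ • y) o = dist y (γ⁻¹ • o) := by
    conv_lhs => rw [← smul_inv_smul γ o]
    exact dist_smul γ y (γ⁻¹ • o)
  have h3 : dist (γ • x) (γ • y) = dist x y := dist_smul γ x y
  simp only [gromovProd, h1, h2, h3]

theorem tendsto_gp_smul {ι : Type} {l : Filter ι} (o : X) (γ : Γ) {u v : ι → X}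
    (h : Tendsto (fun n => gromovProd (u n) (v n) o) l atTop) :
    Tendsto (fun n => gromovProd (γ • u n) (γ • v n) o) l atTop := by
  refine tendsto_atTop_mono (fun n => ?_)
    (tendsto_atTop_add_const_right _ (-(dist o (γ⁻¹ • o))) h)
  have h1 := gromovProd_ge (u n) (v n) o (γ⁻¹ • o)
  rw [gromovProd_smul]
  linarith

/-- The action of `Γ` on the Gromov boundary. -/
def boundarySmul (o : X) (γ : Γ) : GromovBoundary o → GromovBoundary o :=
  Quot.map
    (fun u => ⟨fun n => γ • u.1 n,
      tendsto_gp_smul o γ (u := fun p : ℕ × ℕ => u.1 p.1) (v := fun p : ℕ × ℕ => u.1 p.2) u.2⟩)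
    (fun _ _ huv => tendsto_gp_smul o γ huv)

/-- The diagonal action of `γ` on `∂X × ∂X`. -/
def diagSmul (o : X) (γ : Γ) (p : GromovBoundary o × GromovBoundary o) :
    GromovBoundary o × GromovBoundary o :=
  (boundarySmul o γ p.1, boundarySmul o γ p.2)

end IsometricAction

/-! ### Patterson–Sullivan measures -/

/-- A slowly increasing function, in the sense of Patterson. -/
def SlowlyIncreasing (θ : ℝ → ℝ) : Prop :=
  ∀ ε : ℝ, 0 < ε → ∃ t₀ : ℝ, ∀ t : ℝ, t₀ ≤ t → ∀ u : ℝ, 0 ≤ u →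
    θ (t + u) ≤ Real.exp (ε * u) * θ t

/-- The Patterson weight `θ(d(o,γo)) e^{-s d(o,γo)}`. -/
def psWeight (Γ : Type) [Group Γ] [MulAction Γ X] (o : X) (θ : ℝ → ℝ) (s : ℝ)
    (γ : Γ) : ℝ :=
  θ (dist o (γ • o)) * Real.exp (-s * dist o (γ • o))

/-- `ν` is a Patterson–Sullivan measure of `Γ` on the Gromov boundary:
a probability measure obtained as a weak-* limit, along some sequence `sₙ ↓ h_Γ`,
of the normalized Patterson-weighted orbital measures. -/
def IsPSMeasure (Γ : Type) [Group Γ] [MulAction Γ X] (o : X)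
    (ν : Measure (GromovBoundary o)) : Prop :=
  IsProbabilityMeasure ν ∧
  ∃ θ : ℝ → ℝ, (∀ t, 0 < θ t) ∧ Monotone θ ∧ SlowlyIncreasing θ ∧
    (∀ s : ℝ, Summable (psWeight Γ o θ s) ↔ fullCritExp Γ o < s) ∧
    ∃ sq : ℕ → ℝ, (∀ n, fullCritExp Γ o < sq n) ∧
      Tendsto sq atTop (nhds (fullCritExp Γ o)) ∧
      ∀ f : Bord o → ℝ, Continuous f → (∃ M : ℝ, ∀ p, |f p| ≤ M) →
        Tendsto (fun n =>
            (∑' γ : Γ, psWeight Γ o θ (sq n) γ * f (Bord.ofX o (γ • o))) /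
            (∑' γ : Γ, psWeight Γ o θ (sq n) γ)) atTop
          (nhds (∫ ξ, f (Bord.ofB o ξ) ∂ν))

/-! ### The Bowen–Margulis current and the abstract geodesic flow -/

section BowenMargulis

variable [IsIsometricSMul Γ X]

/-- `μ` is a Bowen–Margulis current associated to the Patterson–Sullivan measure `ν`:
a `Γ`-invariant measure on `∂X × ∂X`, vanishing on the diagonal, absolutely continuous
with respect to `ν ⊗ ν` with density comparable to `e^{2 h_Γ ⟨η,ξ⟩_o}`. -/
def IsBMCurrent (Γ : Type) [Group Γ] [MulAction Γ X] [IsIsometricSMul Γ X] (o : X)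
    (ν : Measure (GromovBoundary o))
    (μ : Measure (GromovBoundary o × GromovBoundary o)) : Prop :=
  μ {p | p.1 = p.2} = 0 ∧
  (∀ γ : Γ, Measure.map (diagSmul o γ) μ = μ) ∧
  μ ≪ ν.prod ν ∧
  ∃ C₀ : ℝ, 0 < C₀ ∧
    ∀ᵐ p ∂(ν.prod ν), p.1 ≠ p.2 →
      C₀⁻¹ * Real.exp (2 * fullCritExp Γ o * (gpBB o o p.1 p.2).toReal)
          ≤ (μ.rnDeriv (ν.prod ν) p).toReal ∧
      (μ.rnDeriv (ν.prod ν) p).toReal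
          ≤ C₀ * Real.exp (2 * fullCritExp Γ o * (gpBB o o p.1 p.2).toReal)

/-- The phase space `SX = ∂X × ∂X × ℝ` of the abstract geodesic flow. -/
def SX (o : X) : Type := (GromovBoundary o × GromovBoundary o) × ℝ

instance (o : X) : MeasurableSpace (SX o) :=
  inferInstanceAs (MeasurableSpace ((GromovBoundary o × GromovBoundary o) × ℝ))

/-- The geodesic flow on `SX`. -/
def flowSX (o : X) (t : ℝ) (v : SX o) : SX o := (v.1, v.2 + t)

/-- The cocycle `β(γ,ξ) = h_Γ⁻¹ log (d(γ⁻¹)_*ν/dν)(ξ)`. -/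
def betaCocycle (Γ : Type) [Group Γ] [MulAction Γ X] [IsIsometricSMul Γ X] (o : X)
    (ν : Measure (GromovBoundary o)) (γ : Γ) (ξ : GromovBoundary o) : ℝ :=
  (fullCritExp Γ o)⁻¹ *
    Real.log ((Measure.map (boundarySmul o γ⁻¹) ν).rnDeriv ν ξ).toReal

/-- The (measurable) action of `Γ` on `SX`:
`γ ⬝ (η,ξ,t) = (γη, γξ, t + κ_γ(η,ξ))`. -/
def smulSX (Γ : Type) [Group Γ] [MulAction Γ X] [IsIsometricSMul Γ X] (o : X)
    (ν : Measure (GromovBoundary o)) (γ : Γ) (v : SX o) : SX o :=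
  ((boundarySmul o γ v.1.1, boundarySmul o γ v.1.2),
    v.2 + (betaCocycle Γ o ν γ v.1.2 - betaCocycle Γ o ν γ v.1.1) / 2)

/-- The Bowen–Margulis measure `m = μ ⊗ dt` on `SX`. -/
def bmMeasure (o : X) (μ : Measure (GromovBoundary o × GromovBoundary o)) :
    Measure (SX o) :=
  μ.prod (volume : Measure ℝ)

/-- `D` is a Borel fundamental domain for the `Γ`-action on `SX`. -/
def IsFundDom (Γ : Type) [Group Γ] [MulAction Γ X] [IsIsometricSMul Γ X] (o : X)
    (ν : Measure (GromovBoundary o)) (μ : Measure (GromovBoundary o × GromovBoundary o))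
    (D : Set (SX o)) : Prop :=
  MeasurableSet D ∧ ∀ᵐ v ∂(bmMeasure o μ), ∃! γ : Γ, smulSX Γ o ν γ v ∈ D

/-- A subset of `SX` is `Γ`-invariant up to measure zero. -/
def GammaInvariant (Γ : Type) [Group Γ] [MulAction Γ X] [IsIsometricSMul Γ X] (o : X)
    (ν : Measure (GromovBoundary o)) (μ : Measure (GromovBoundary o × GromovBoundary o))
    (B : Set (SX o)) : Prop :=
  ∀ γ : Γ, bmMeasure o μ (B ∆ (smulSX Γ o ν γ ⁻¹' B)) = 0

/-- The measure `m̄` of a subset of `SX`, computed via the fundamental domain `D`. -/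
def mbar (o : X) (μ : Measure (GromovBoundary o × GromovBoundary o))
    (D B : Set (SX o)) : ℝ≥0∞ :=
  bmMeasure o μ (B ∩ D)

/-- Conservativity of the geodesic flow on `(SX, 𝓑_Γ, m̄)`: almost every point of
a `Γ`-invariant set of positive finite measure returns at unboundedly large times. -/
def ConservativeFlow (Γ : Type) [Group Γ] [MulAction Γ X] [IsIsometricSMul Γ X] (o : X)
    (ν : Measure (GromovBoundary o)) (μ : Measure (GromovBoundary o × GromovBoundary o))
    (D : Set (SX o)) : Prop :=
  ∀ B : Set (SX o), MeasurableSet B → GammaInvariant Γ o ν μ B →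
    0 < mbar o μ D B → mbar o μ D B < ⊤ →
    bmMeasure o μ ((B \ {v | ∀ T : ℝ, ∃ t : ℝ, T ≤ t ∧ flowSX o t v ∈ B}) ∩ D) = 0

/-- Ergodicity of the geodesic flow on `(SX, 𝓑_Γ, m̄)`. -/
def ErgodicFlow (Γ : Type) [Group Γ] [MulAction Γ X] [IsIsometricSMul Γ X] (o : X)
    (ν : Measure (GromovBoundary o)) (μ : Measure (GromovBoundary o × GromovBoundary o))
    (D : Set (SX o)) : Prop :=
  ∀ B : Set (SX o), MeasurableSet B → GammaInvariant Γ o ν μ B →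
    (∀ t : ℝ, bmMeasure o μ (B ∆ (flowSX o t ⁻¹' B)) = 0) →
    mbar o μ D B = 0 ∨ mbar o μ D Bᶜ = 0

/-- Ergodicity of the diagonal `Γ`-action on `(∂²X, μ)`. -/
def ErgodicBoundaryAction (Γ : Type) [Group Γ] [MulAction Γ X] [IsIsometricSMul Γ X] (o : X)
    (μ : Measure (GromovBoundary o × GromovBoundary o)) : Prop :=
  ∀ A : Set (GromovBoundary o × GromovBoundary o), MeasurableSet A →
    (∀ γ : Γ, μ (A ∆ (diagSmul o γ ⁻¹' A)) = 0) →
    μ A = 0 ∨ μ Aᶜ = 0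

/-- The Poincaré series of `Γ` diverges at `s = h_Γ`. -/
def Divergent (Γ : Type) [Group Γ] [MulAction Γ X] (o : X) : Prop :=
  ¬ Summable (fun γ : Γ => Real.exp (-(fullCritExp Γ o) * dist (γ • o) o))

end BowenMargulis

/-! ### Almost invariant vectors, co-amenability, properties (T) and (FM) -/

/-- The Koopman representation of the `Γ`-action on the countable set `Y`
almost has invariant vectors: for every finite `S ⊆ Γ` and `ε > 0` there is a
nonzero `φ ∈ ℓ²(Y)` with `‖ρ(γ)φ - φ‖ < ε ‖φ‖` for all `γ ∈ S`
(stated with squared `ℓ²` norms). -/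
def KoopmanAlmostInvariant (Γ Y : Type) [Group Γ] [MulAction Γ Y] : Prop :=
  ∀ S : Finset Γ, ∀ ε : ℝ, 0 < ε → ∃ φ : Y → ℝ, Memℓp φ 2 ∧ φ ≠ 0 ∧
    ∀ γ ∈ S, ∑' y : Y, (φ (γ⁻¹ • y) - φ y) ^ 2 < ε ^ 2 * ∑' y : Y, (φ y) ^ 2

/-- `Γ'` is co-amenable in `Γ`: the Koopman representation of `Γ` on `ℓ²` of the
coset space almost has invariant vectors. -/
def CoAmenable (Γ : Type) [Group Γ] (Γ' : Subgroup Γ) : Prop :=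
  KoopmanAlmostInvariant Γ (Γ ⧸ Γ')

/-- A unitary representation almost has invariant vectors. -/
def AlmostInvariantVectors {Γ : Type} [Group Γ] {H : Type} [NormedAddCommGroup H]
    [InnerProductSpace ℝ H] (ρ : Γ →* (H ≃ₗᵢ[ℝ] H)) : Prop :=
  ∀ S : Finset Γ, ∀ ε : ℝ, 0 < ε → ∃ φ : H, φ ≠ 0 ∧ ∀ γ ∈ S, ‖ρ γ φ - φ‖ < ε * ‖φ‖

/-- Kazhdan's property (T): every unitary representation which almost has
invariant vectors has a nonzero invariant vector. -/
def HasPropertyT (Γ : Type) [Group Γ] : Prop :=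
  ∀ (H : Type) [NormedAddCommGroup H] [InnerProductSpace ℝ H] [CompleteSpace H],
    ∀ ρ : Γ →* (H ≃ₗᵢ[ℝ] H), AlmostInvariantVectors ρ →
      ∃ φ : H, φ ≠ 0 ∧ ∀ γ : Γ, ρ γ φ = φ

/-- Property (FM): every action of `Γ` on a countable set whose Koopman
representation almost has invariant vectors has a finite orbit. -/
def HasPropertyFM (Γ : Type) [Group Γ] : Prop :=
  ∀ (Y : Type) [Countable Y], ∀ (_ : MulAction Γ Y),
    KoopmanAlmostInvariant Γ Y → ∃ y : Y, (MulAction.orbit Γ y).Finite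

/-! ### Twisted Poincaré series -/

/-- The twisted Poincaré series `A(s) = Σ e^{-s d(γ o, o)} ρ(γ)` is bounded. -/
def TwistedBounded {Γ : Type} [Group Γ] [MulAction Γ X] {H : Type}
    [NormedAddCommGroup H] [InnerProductSpace ℝ H]
    (ρ : Γ →* (H ≃ₗᵢ[ℝ] H)) (o : X) (s : ℝ) : Prop :=
  ∃ M : ℝ, ∀ S : Finset Γ,
    ‖∑ γ ∈ S, Real.exp (-s * dist (γ • o) o) •
        ((ρ γ).toLinearIsometry.toContinuousLinearMap : H →L[ℝ] H)‖ ≤ M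

/-- The critical exponent `h_ρ` of the representation `ρ`. -/
def twistedCritExp {Γ : Type} [Group Γ] [MulAction Γ X] {H : Type}
    [NormedAddCommGroup H] [InnerProductSpace ℝ H]
    (ρ : Γ →* (H ≃ₗᵢ[ℝ] H)) (o : X) : ℝ :=
  sInf {s : ℝ | 0 ≤ s ∧ TwistedBounded ρ o s}

/-! ### Word length and the horocone over a Cayley graph -/

/-- The word length of `γ` with respect to the generating set `S`. -/
def wordLength {P : Type} [Group P] (S : Set P) (γ : P) : ℕ :=
  sInf {n : ℕ | ∃ l : List P, l.length = n ∧ (∀ x ∈ l, x ∈ S) ∧ l.prod = γ}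

/-- `horoBase S γ = (√(|γ|² + 4) - |γ|)/2`, so that the orbital distance on the
horocone over the Cayley graph satisfies `e^{-d(γ o, o)} = (horoBase S γ)²`. -/
def horoBase {P : Type} [Group P] (S : Set P) (γ : P) : ℝ :=
  (Real.sqrt ((wordLength S γ : ℝ) ^ 2 + 4) - (wordLength S γ : ℝ)) / 2

/-! ### The twisted Poincaré series of a Koopman representation -/

/-- Boundedness of the twisted Poincaré series
`A(s) = Σ_γ e^{-s d(γ o, o)} ρ(γ)` for the Koopman representation of `Γ`
on `ℓ²` of the coset space of `Γ'` (stated with squared `ℓ²` norms). -/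
def KoopmanTwistedBounded {X : Type} [MetricSpace X] {Γ : Type} [Group Γ]
    [MulAction Γ X] (o : X) (Γ' : Subgroup Γ) (s : ℝ) : Prop :=
  ∃ M : ℝ, ∀ F : Finset Γ, ∀ φ : Γ ⧸ Γ' → ℝ, Memℓp φ 2 →
    ∑' y : Γ ⧸ Γ', (∑ γ ∈ F, Real.exp (-s * dist (γ • o) o) * φ (γ⁻¹ • y)) ^ 2
      ≤ M ^ 2 * ∑' y : Γ ⧸ Γ', (φ y) ^ 2

/-- The critical exponent `h_ρ` of the Koopman representation on `ℓ²(Γ'\Γ)`. -/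
def koopmanCritExp {X : Type} [MetricSpace X] {Γ : Type} [Group Γ]
    [MulAction Γ X] (o : X) (Γ' : Subgroup Γ) : ℝ :=
  sInf {s : ℝ | 0 ≤ s ∧ KoopmanTwistedBounded o Γ' s}

/-! Join a point of `K` to `ξ` by a geodesic ray, obtained as a limit of geodesic segments
(properness) whose endpoint is `ξ` (hyperbolicity). As `ξ` is not `K`-radial, the ray meets only
finitely many translates `γ • K`, so it has a last visit time `T` to `Γ • K`, say in `γ • K`.
Restarted at `T` and pulled back by `γ`, the ray starts in `K` and meets `Γ • K` only there, so its
endpoint `η` lies in `𝓛_K` and `γ • η = ξ`. -/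

theorem gromovProd_comm (x y z : X) : gromovProd x y z = gromovProd y x z := by
  simp only [gromovProd, dist_comm x y, add_comm (dist x z)]

theorem gromovProd_self (x z : X) : gromovProd x x z = dist x z := by
  simp [gromovProd]

theorem continuous_gromovProd_left (y z : X) : Continuous fun x : X => gromovProd x y z := by
  unfold gromovProd
  fun_prop

theorem SeqToInf.tendsto_dist {o : X} {u : ℕ → X} (hu : SeqToInf o u) (x : X) :
    Tendsto (fun n => dist x (u n)) atTop atTop := by
  have hdiag : Tendsto (fun n => dist (u n) o) atTop atTop := by
    refine (hu.comp tendsto_atTop_diagonal).congr fun n => ?_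
    exact gromovProd_self (u n) o
  refine tendsto_atTop_mono (fun n => ?_) (tendsto_atTop_add_const_right _ (-dist x o) hdiag)
  linarith [dist_triangle (u n) x o, dist_comm x (u n)]

theorem gromovProd_geodesic_eq {g : ℝ → X} {x y : X} (hg0 : g 0 = x) (hgy : g (dist x y) = y)
    (hg : IsGeodesicOn g (Icc 0 (dist x y))) {t : ℝ} (ht : t ∈ Icc 0 (dist x y)) :
    gromovProd (g t) y x = t := by
  have hx : dist (g t) x = t := by
    rw [← hg0, hg t ht 0 ⟨le_rfl, dist_nonneg⟩, sub_zero, abs_of_nonneg ht.1]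
  have hy : dist (g t) y = dist x y - t := by
    rw [← hgy, hg t ht _ ⟨dist_nonneg, le_rfl⟩, hgy, abs_of_nonpos (by linarith [ht.2]), neg_sub]
  simp only [gromovProd, hx, hy, dist_comm y x]
  ring

namespace IsGeodesicRay

variable {c : ℝ → X}

theorem dist_apply_zero (hc : IsGeodesicRay c) {t : ℝ} (ht : 0 ≤ t) : dist (c 0) (c t) = t := by
  rw [hc 0 self_mem_Ici t ht, zero_sub, abs_neg, abs_of_nonneg ht]

theorem min_sub_dist_le_gromovProd (hc : IsGeodesicRay c) (o : X) {s t : ℝ}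
    (hs : 0 ≤ s) (ht : 0 ≤ t) : min s t - dist (c 0) o ≤ gromovProd (c s) (c t) o := by
  have hst := hc s hs t ht
  have h0s := hc.dist_apply_zero hs
  have h0t := hc.dist_apply_zero ht
  have t1 := dist_triangle (c 0) o (c s)
  have t2 := dist_triangle (c 0) o (c t)
  rw [dist_comm o] at t1 t2
  simp only [gromovProd]
  rcases le_total s t with hle | hle
  · rw [min_eq_left hle, abs_of_nonpos (by linarith)] at *
    linarith
  · rw [min_eq_right hle, abs_of_nonneg (by linarith)] at *
    linarith

theorem seqToInf (hc : IsGeodesicRay c) (o : X) : SeqToInf o fun n : ℕ => c n := by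
  have hmin : Tendsto (fun p : ℕ × ℕ => min (p.1 : ℝ) p.2 - dist (c 0) o) atTop atTop := by
    refine tendsto_atTop_add_const_right _ _ (tendsto_atTop.2 fun b => ?_)
    rw [← prod_atTop_atTop_eq]
    filter_upwards [(tendsto_natCast_atTop_atTop.comp tendsto_fst).eventually_ge_atTop b,
      (tendsto_natCast_atTop_atTop.comp tendsto_snd).eventually_ge_atTop b] with p h1 h2
    exact le_min h1 h2
  exact tendsto_atTop_mono
    (fun p => hc.min_sub_dist_le_gromovProd o p.1.cast_nonneg p.2.cast_nonneg) hmin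

theorem continuousOn (hc : IsGeodesicRay c) : ContinuousOn c (Ici 0) :=
  (LipschitzOnWith.of_dist_le_mul (K := 1) fun s hs t ht => by
    rw [hc s hs t ht, NNReal.coe_one, one_mul, Real.dist_eq]).continuousOn

theorem comp_const_add (hc : IsGeodesicRay c) {T : ℝ} (hT : 0 ≤ T) :
    IsGeodesicRay fun s => c (T + s) := fun s hs t ht => by
  rw [hc (T + s) (mem_Ici.2 (by linarith [mem_Ici.1 hs]))
    (T + t) (mem_Ici.2 (by linarith [mem_Ici.1 ht])), add_sub_add_left_eq_sub]

theorem smul [IsIsometricSMul Γ X] (hc : IsGeodesicRay c) (γ : Γ) :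
    IsGeodesicRay fun s => γ • c s := fun s hs t ht => by
  rw [dist_smul, hc s hs t ht]

theorem exists_isGreatest_preimage (hc : IsGeodesicRay c) {F : Set X} (hF : IsClosed F)
    (hFb : Bornology.IsBounded F) (h0 : c 0 ∈ F) :
    ∃ T, IsGreatest {t | 0 ≤ t ∧ c t ∈ F} T := by
  obtain ⟨R, hR⟩ := hFb.subset_closedBall (c 0)
  have hsub : {t | 0 ≤ t ∧ c t ∈ F} ⊆ Icc 0 R := fun t ⟨ht, hct⟩ => by
    have h := hR hct
    rw [mem_closedBall, dist_comm, hc.dist_apply_zero ht] at h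
    exact ⟨ht, h⟩
  have hclosed : IsClosed {t | 0 ≤ t ∧ c t ∈ F} :=
    hc.continuousOn.preimage_isClosed_of_isClosed isClosed_Ici hF
  exact (isCompact_Icc.of_isClosed_subset hclosed hsub).exists_isGreatest ⟨0, le_rfl, h0⟩

theorem exists_lastVisit [IsIsometricSMul Γ X] (hc : IsGeodesicRay c) {K : Set X}
    (hK : IsCompact K) (hfin : {γ : Γ | ∃ t, 0 ≤ t ∧ c t ∈ γ • K}.Finite) (h0 : c 0 ∈ K) :
    ∃ T, 0 ≤ T ∧ ∃ γ : Γ, c T ∈ γ • K ∧ ∀ t, 0 ≤ t → c t ∈ ⋃ g : Γ, g • K → t ≤ T := by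
  set A := {γ : Γ | ∃ t, 0 ≤ t ∧ c t ∈ γ • K}
  have hF : IsCompact (⋃ γ ∈ A, γ • K) := hfin.isCompact_biUnion fun γ _ => hK.smul γ
  have hvisit : ∀ t, 0 ≤ t → (c t ∈ ⋃ g : Γ, g • K ↔ c t ∈ ⋃ γ ∈ A, γ • K) := by
    intro t ht
    simp only [mem_iUnion, exists_prop]
    exact ⟨fun ⟨g, hg⟩ => ⟨g, ⟨t, ht, hg⟩, hg⟩, fun ⟨g, _, hg⟩ => ⟨g, hg⟩⟩
  have h0F : c 0 ∈ ⋃ γ ∈ A, γ • K :=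
    (hvisit 0 le_rfl).1 (mem_iUnion.2 ⟨1, by rwa [one_smul]⟩)
  obtain ⟨T, ⟨hT, hcT⟩, hmax⟩ := hc.exists_isGreatest_preimage hF.isClosed hF.isBounded h0F
  obtain ⟨γ, hγ⟩ := mem_iUnion.1 ((hvisit T hT).2 hcT)
  exact ⟨T, hT, γ, hγ, fun t ht hct => hmax ⟨ht, (hvisit t ht).1 hct⟩⟩

end IsGeodesicRay

theorem endsAt_unique {o : X} {c : ℝ → X} {ξ η : GromovBoundary o} (hξ : endsAt o c ξ)
    (hη : endsAt o c η) : ξ = η := by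
  obtain ⟨_, rfl⟩ := hξ
  obtain ⟨_, rfl⟩ := hη
  rfl

theorem IsGeodesicRay.endsAt_comp_const_add {o : X} {c : ℝ → X} {ξ : GromovBoundary o}
    (hc : IsGeodesicRay c) {T : ℝ} (hT : 0 ≤ T) (hξ : endsAt o c ξ) :
    endsAt o (fun s => c (T + s)) ξ := by
  obtain ⟨_, rfl⟩ := hξ
  refine ⟨(hc.comp_const_add hT).seqToInf o, Quot.sound ?_⟩
  refine tendsto_atTop_mono (fun n => ?_) (tendsto_atTop_add_const_right _ (-dist (c 0) o)
    (tendsto_natCast_atTop_atTop (R := ℝ)))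
  have h := hc.min_sub_dist_le_gromovProd o (add_nonneg hT n.cast_nonneg) n.cast_nonneg
  rwa [min_eq_right (by linarith)] at h

theorem endsAt_smul [IsIsometricSMul Γ X] {o : X} {c : ℝ → X} {ξ : GromovBoundary o}
    (γ : Γ) (hξ : endsAt o c ξ) : endsAt o (fun s => γ • c s) (boundarySmul o γ ξ) := by
  obtain ⟨_, rfl⟩ := hξ
  exact ⟨_, rfl⟩

/-- The point `η` is the endpoint of the ray `s ↦ γ⁻¹ • c (T + s)`. -/
theorem IsGeodesicRay.exists_LK_of_lastVisit [IsIsometricSMul Γ X] {o : X} {c : ℝ → X}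
    {ξ : GromovBoundary o} {K : Set X} (hc : IsGeodesicRay c) (hξ : endsAt o c ξ)
    {T : ℝ} (hT : 0 ≤ T) {γ : Γ} (hγ : c T ∈ γ • K)
    (hlast : ∀ t, 0 ≤ t → c t ∈ ⋃ g : Γ, g • K → t ≤ T) :
    ∃ η ∈ LK o Γ K, boundarySmul o γ η = ξ := by
  set r : ℝ → X := fun s => γ⁻¹ • c (T + s)
  have hr : IsGeodesicRay r := (hc.comp_const_add hT).smul γ⁻¹
  have hr0 : r 0 ∈ K := by
    simpa [r] using mem_smul_set_iff_inv_smul_mem.1 hγ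
  have hrK : r '' Ici 0 ∩ ⋃ g : Γ, g • K ⊆ K := by
    rintro _ ⟨⟨s, hs, rfl⟩, hx⟩
    obtain ⟨g, hg⟩ := mem_iUnion.1 hx
    have hvisit : c (T + s) ∈ ⋃ g : Γ, g • K := by
      refine mem_iUnion.2 ⟨γ * g, ?_⟩
      rw [mul_smul, ← smul_inv_smul γ (c (T + s))]
      exact smul_mem_smul_set hg
    have hs0 : s = 0 := le_antisymm (by linarith [hlast _ (by linarith [mem_Ici.1 hs]) hvisit])
      (mem_Ici.1 hs)
    rwa [hs0]
  have hγr : (fun s => γ • r s) = fun s => c (T + s) := funext fun s => smul_inv_smul γ _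
  refine ⟨mkBoundary o ⟨_, hr.seqToInf o⟩, ⟨r, hr, hr0, ⟨_, rfl⟩, hrK⟩, endsAt_unique ?_
    (hc.endsAt_comp_const_add hT hξ)⟩
  rw [← hγr]
  exact endsAt_smul γ ⟨_, rfl⟩

theorem exists_geodesicRay_mapClusterPt [ProperSpace X] {x₀ : X} {d : ℕ → ℝ}
    (hd : Tendsto d atTop atTop) {g : ℕ → ℝ → X} (hg0 : ∀ n, g n 0 = x₀)
    (hg : ∀ n, IsGeodesicOn (g n) (Icc 0 (d n))) :
    ∃ c : ℝ → X, IsGeodesicRay c ∧ c 0 = x₀ ∧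
      ∀ t, 0 ≤ t → MapClusterPt (c t) atTop fun n => g n t := by
  set 𝒰 : Ultrafilter ℕ := Ultrafilter.of atTop
  have h𝒰 : (𝒰 : Filter ℕ) ≤ atTop := Ultrafilter.of_le atTop
  have hball : ∀ t, 0 ≤ t → ∀ᶠ n in (𝒰 : Filter ℕ), g n t ∈ closedBall x₀ t := by
    intro t ht
    filter_upwards [h𝒰 (hd.eventually_ge_atTop t)] with n hn
    rw [mem_closedBall, ← hg0 n, hg n t ⟨ht, hn⟩ 0 ⟨le_rfl, ht.trans hn⟩, sub_zero,
      abs_of_nonneg ht]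
  have hlim : ∀ t, 0 ≤ t → ∃ x, Tendsto (fun n => g n t) 𝒰 (𝓝 x) := fun t ht => by
    obtain ⟨x, -, hx⟩ := (isCompact_closedBall x₀ t).ultrafilter_le_nhds
      (𝒰.map fun n => g n t) (le_principal_iff.2 (hball t ht))
    exact ⟨x, hx⟩
  have : Nonempty X := ⟨x₀⟩
  choose! c hc using hlim
  have hc0 : c 0 = x₀ :=
    tendsto_nhds_unique (hc 0 le_rfl) (by simp only [hg0]; exact tendsto_const_nhds)
  refine ⟨c, fun s hs t ht => ?_, hc0, fun t ht => ?_⟩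
  · have hev : ∀ᶠ n in (𝒰 : Filter ℕ), dist (g n s) (g n t) = |s - t| := by
      filter_upwards [h𝒰 (hd.eventually_ge_atTop (max s t))] with n hn
      exact hg n s ⟨hs, (le_max_left s t).trans hn⟩ t ⟨ht, (le_max_right s t).trans hn⟩
    exact tendsto_nhds_unique (((hc s hs).dist (hc t ht)).congr' hev) tendsto_const_nhds
  · exact mapClusterPt_iff_ultrafilter.2 ⟨𝒰, h𝒰, hc t ht⟩

theorem GromovHyperbolicWith.exists_geodesicRay_endsAt [ProperSpace X] {δ : ℝ}
    (hhyp : GromovHyperbolicWith δ X) (hgeo : GeodesicSpace X) {o : X} (x₀ : X)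
    (ξ : GromovBoundary o) : ∃ c : ℝ → X, IsGeodesicRay c ∧ c 0 = x₀ ∧ endsAt o c ξ := by
  obtain ⟨⟨u, hu⟩, rfl⟩ := Quot.exists_rep ξ
  choose g hg0 hgu hg using fun n => hgeo x₀ (u n)
  obtain ⟨c, hc, hc0, hclust⟩ := exists_geodesicRay_mapClusterPt (hu.tendsto_dist x₀) hg0 hg
  refine ⟨c, hc, hc0, hc.seqToInf o, Quot.sound (tendsto_atTop.2 fun M => ?_)⟩
  have hfar : ∀ᶠ m in atTop, ∀ᶠ n in atTop, M + δ ≤ gromovProd (u n) (u m) o := by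
    have h := hu.eventually (eventually_ge_atTop (M + δ))
    rw [← prod_atTop_atTop_eq] at h
    exact h.curry.mono fun m hm => hm.mono fun n hn => (gromovProd_comm (u m) (u n) o) ▸ hn
  -- the four-point condition at the approximating segments `g n`, passed to the limit ray
  have hbound : ∀ᶠ m in atTop, ∀ t, 0 ≤ t →
      min (t - dist x₀ o) (M + δ) - δ ≤ gromovProd (c t) (u m) o := by
    filter_upwards [hfar] with m hm t ht
    refine (isClosed_le continuous_const (continuous_gromovProd_left (u m) o)).mem_of_mapClusterPt
      (hclust t ht) ?_
    filter_upwards [hm, (hu.tendsto_dist x₀).eventually_ge_atTop t] with n hn htn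
    have hgt : t - dist x₀ o ≤ gromovProd (g n t) (u n) o := by
      have h := gromovProd_ge (g n t) (u n) x₀ o
      rwa [gromovProd_geodesic_eq (hg0 n) (hgu n) (hg n) ⟨ht, htn⟩] at h
    linarith [hhyp (g n t) (u n) (u m) o, min_le_min hgt hn]
  filter_upwards [hbound, eventually_ge_atTop ⌈M + δ + dist x₀ o⌉₊] with m hm hmM
  have hm' : M + δ + dist x₀ o ≤ m := Nat.ceil_le.1 hmM
  have h := hm m m.cast_nonneg
  rw [min_eq_right (by linarith)] at h
  linarith

theorem compl_radialLimitSet_subset_orbit_LK_general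
    {X : Type} [MetricSpace X] [ProperSpace X]
    {Γ : Type} [Group Γ] [MulAction Γ X] [IsIsometricSMul Γ X]
    (δ : ℝ) (hhyp : GromovHyperbolicWith δ X) (hgeo : GeodesicSpace X)
    (o : X)
    (K : Set X) (hK : IsCompact K) (hKne : K.Nonempty) :
    ∀ ξ : GromovBoundary o, ξ ∉ radialLimitSet o Γ K →
      ∃ γ : Γ, ∃ η ∈ LK o Γ K, boundarySmul o γ η = ξ := by
  intro ξ hξ
  obtain ⟨x₀, hx₀⟩ := hKne
  obtain ⟨c, hc, hc0, hcξ⟩ := hhyp.exists_geodesicRay_endsAt hgeo x₀ ξ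
  have hfin : {γ : Γ | ∃ t, 0 ≤ t ∧ c t ∈ γ • K}.Finite :=
    Set.not_infinite.1 fun hinf => hξ ⟨c, hc, hcξ, hinf⟩
  obtain ⟨T, hT, γ, hγ, hlast⟩ := hc.exists_lastVisit hK hfin (hc0 ▸ hx₀)
  exact ⟨γ, hc.exists_LK_of_lastVisit hcξ hT hγ hlast⟩

/-- Let `X` be a proper geodesic `δ`-hyperbolic space and `Γ` a
group acting properly by isometries on `X`. For every nonempty compact subset
`K ⊆ X`, the complement of the `K`-radial limit set in the Gromov boundary is
contained in the `Γ`-orbit of `𝓛_K`: `∂X \ Λ_rad^K ⊆ Γ·𝓛_K`. -/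
theorem compl_radialLimitSet_subset_orbit_LK
    {X : Type} [MetricSpace X] [ProperSpace X]
    {Γ : Type} [Group Γ] [MulAction Γ X] [IsIsometricSMul Γ X]
    (δ : ℝ) (hδ : 0 < δ) (hhyp : GromovHyperbolicWith δ X) (hgeo : GeodesicSpace X)
    (hact : ProperAction Γ X) (o : X)
    (K : Set X) (hK : IsCompact K) (hKne : K.Nonempty) :
    ∀ ξ : GromovBoundary o, ξ ∉ radialLimitSet o Γ K →
      ∃ γ : Γ, ∃ η ∈ LK o Γ K, boundarySmul o γ η = ξ :=
  compl_radialLimitSet_subset_orbit_LK_general δ hhyp hgeo o K hK hKne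

end SPR
end
end

section
/- Let X be a proper geodesic δ-hyperbolic space, Γ a group acting properly by isometries on X with basepoint o, k ⊆ X a compact set containing o, and K the closed 6δ-neighbourhood of k. Then there exist a finite subset S ⊆ Γ and r₀ > 0 with the following property: for every x ∈ K, every y ∈ X ∪ ∂X, every geodesic c from x to y with c ∩ Γ·K ⊆ K, and every γ ∈ Γ, there exists β ∈ S·Γ_k such that ⟨x,γo⟩_{βo} ≤ r₀, ⟨y,γo⟩_{βo} ≤ r₀, and d(x,βo) ≥ ⟨y,γo⟩_x − r₀. -/
open Filter Topology Metric Set MeasureTheory Pointwise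
open scoped symmDiff ENNReal NNReal

noncomputable section

namespace SPR

variable {X : Type} [MetricSpace X]

variable {Γ : Type} [Group Γ] [MulAction Γ X]

theorem gromovProd_nonneg (x y z : X) : 0 ≤ gromovProd x y z := by
  unfold gromovProd; linarith [dist_triangle x z y, dist_comm z y]

theorem gromovProd_le_dist_left (x y z : X) : gromovProd x y z ≤ dist x z := by
  unfold gromovProd; linarith [dist_triangle y x z, dist_comm x y]

theorem gromovProd_le_dist_right (x y z : X) : gromovProd x y z ≤ dist y z := by
  unfold gromovProd; linarith [dist_triangle x y z]

theorem dist_sub_dist_le_gromovProd (x y z : X) : dist x z - dist x y ≤ gromovProd x y z := by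
  unfold gromovProd; linarith [dist_triangle x y z]

namespace IsGeodesicOn

variable {σ : ℝ → X} {I J : Set ℝ}

theorem mono (h : IsGeodesicOn σ I) (hJ : J ⊆ I) : IsGeodesicOn σ J :=
  fun s hs t ht => h s (hJ hs) t (hJ ht)

theorem continuousOn (h : IsGeodesicOn σ I) : ContinuousOn σ I :=
  (LipschitzOnWith.of_dist_le_mul (K := 1) fun s hs t ht => by
    rw [h s hs t ht, NNReal.coe_one, one_mul, Real.dist_eq]).continuousOn

theorem dist_eq_sub (h : IsGeodesicOn σ I) {a b : ℝ} (ha : a ∈ I) (hb : b ∈ I) (hab : a ≤ b) :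
    dist (σ a) (σ b) = b - a := by
  rw [h a ha b hb, abs_of_nonpos (sub_nonpos.2 hab), neg_sub]

theorem gromovProd_eq_sub (h : IsGeodesicOn σ I) {t a b : ℝ} (ht : t ∈ I) (ha : a ∈ I)
    (hb : b ∈ I) (hta : t ≤ a) (hab : a ≤ b) : gromovProd (σ a) (σ b) (σ t) = a - t := by
  simp only [gromovProd, dist_comm (σ a) (σ t), dist_comm (σ b) (σ t),
    h.dist_eq_sub ht ha hta, h.dist_eq_sub ht hb (hta.trans hab), h.dist_eq_sub ha hb hab]
  ring

theorem gromovProd_eq_zero (h : IsGeodesicOn σ I) {t a b : ℝ} (ha : a ∈ I) (ht : t ∈ I)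
    (hb : b ∈ I) (hat : a ≤ t) (htb : t ≤ b) : gromovProd (σ a) (σ b) (σ t) = 0 := by
  simp only [gromovProd, h.dist_eq_sub ha ht hat, dist_comm (σ b) (σ t),
    h.dist_eq_sub ht hb htb, h.dist_eq_sub ha hb (hat.trans htb)]
  ring

end IsGeodesicOn

namespace GromovHyperbolicWith

variable {δ : ℝ}

theorem nonneg (hhyp : GromovHyperbolicWith δ X) (a : X) : 0 ≤ δ := by
  have := hhyp a a a a
  simp only [gromovProd, dist_self, min_self] at this
  linarith

theorem gromovProd_chain (hhyp : GromovHyperbolicWith δ X) (a b c d w : X) :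
    gromovProd a b w ≤ gromovProd a d w + 2 * δ ∨ gromovProd b c w ≤ gromovProd a d w + 2 * δ ∨
      gromovProd c d w ≤ gromovProd a d w + 2 * δ := by
  have habd := hhyp a b d w
  have hbcd := hhyp b c d w
  by_contra! h
  obtain ⟨hab, hbc, hcd⟩ := h
  have hbd : gromovProd a d w + δ < gromovProd b d w := by
    have := lt_min hbc hcd
    linarith
  have := lt_min (show gromovProd a d w + δ < gromovProd a b w by linarith [hhyp.nonneg a]) hbd
  linarith

theorem gromovProd_le_of_near_ends (hhyp : GromovHyperbolicWith δ X) {a b a' b' w : X}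
    (hw : gromovProd a b w = 0) (ha : dist a a' + 2 * δ < dist a w)
    (hb : dist b b' + 2 * δ < dist b w) : gromovProd a' b' w ≤ 2 * δ := by
  have h₁ := dist_sub_dist_le_gromovProd a a' w
  have h₂ := dist_sub_dist_le_gromovProd b b' w
  rcases hhyp.gromovProd_chain a a' b' b w with h | h | h <;> linarith [gromovProd_comm b' b w]

theorem gromovProd_le_of_gromovProd_eq_zero (hhyp : GromovHyperbolicWith δ X) {x y q : X}
    (hq : gromovProd x y q = 0) (z : X) :
    gromovProd z y q ≤ max (gromovProd z y x - dist x q) 0 + δ := by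
  have h := hhyp x z y q
  rw [hq, sub_nonpos, min_le_iff] at h
  rcases h with h | h
  · have hmax := le_max_left (gromovProd z y x - dist x q) 0
    simp only [gromovProd] at h hq hmax ⊢
    linarith [dist_comm x q, dist_comm y x, dist_comm z x]
  · linarith [le_max_right (gromovProd z y x - dist x q) 0]

theorem dist_gromovProd_le (hhyp : GromovHyperbolicWith δ X) {σ : ℝ → X} {m : ℝ}
    (hσ : IsGeodesicOn σ (Icc 0 m)) (hm : 0 ≤ m) (w : X) :
    dist w (σ (gromovProd (σ m) w (σ 0))) ≤ gromovProd (σ 0) (σ m) w + 2 * δ := by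
  have hd0m : dist (σ m) (σ 0) = m := by
    rw [dist_comm, hσ.dist_eq_sub ⟨le_rfl, hm⟩ ⟨hm, le_rfl⟩ hm, sub_zero]
  set s := gromovProd (σ m) w (σ 0) with hs_def
  have hs : s ∈ Icc 0 m :=
    ⟨gromovProd_nonneg _ _ _, (gromovProd_le_dist_left _ _ _).trans_eq hd0m⟩
  have hms : gromovProd (σ m) (σ s) (σ 0) = s := by
    rw [gromovProd_comm, hσ.gromovProd_eq_sub ⟨le_rfl, hm⟩ hs ⟨hm, le_rfl⟩ hs.1 hs.2, sub_zero]
  have h := hhyp w (σ m) (σ s) (σ 0)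
  rw [gromovProd_comm w, hms, min_self] at h
  have hd0s : dist (σ s) (σ 0) = s := by
    rw [dist_comm, hσ.dist_eq_sub ⟨le_rfl, hm⟩ hs hs.1, sub_zero]
  have e1 : gromovProd w (σ s) (σ 0) = (dist w (σ 0) + s - dist w (σ s)) / 2 := by
    simp only [gromovProd, hd0s]
  have e2 : s = (m + dist w (σ 0) - dist (σ m) w) / 2 := by
    rw [hs_def]; simp only [gromovProd, hd0m]
  have e3 : gromovProd (σ 0) (σ m) w = (dist (σ 0) w + dist (σ m) w - m) / 2 := by
    simp only [gromovProd, dist_comm (σ 0) (σ m), hd0m]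
  linarith [dist_comm (σ 0) w]

end GromovHyperbolicWith

theorem exists_isLeast_hitting {Y : Type*} [TopologicalSpace Y] {f : ℝ → Y} {a b : ℝ}
    (hf : ContinuousOn f (Icc a b)) {F : Set Y} (hF : IsClosed F) {t : ℝ} (ht : t ∈ Icc a b)
    (htF : f t ∈ F) : ∃ t₀, IsLeast {s ∈ Icc a b | f s ∈ F} t₀ :=
  (isCompact_Icc.of_isClosed_subset (hf.preimage_isClosed_of_isClosed isClosed_Icc hF)
    inter_subset_left).exists_isLeast ⟨t, ht, htF⟩

theorem exists_isGreatest_hitting {Y : Type*} [TopologicalSpace Y] {f : ℝ → Y} {a b : ℝ}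
    (hf : ContinuousOn f (Icc a b)) {F : Set Y} (hF : IsClosed F) {t : ℝ} (ht : t ∈ Icc a b)
    (htF : f t ∈ F) : ∃ t₀, IsGreatest {s ∈ Icc a b | f s ∈ F} t₀ :=
  (isCompact_Icc.of_isClosed_subset (hf.preimage_isClosed_of_isClosed isClosed_Icc hF)
    inter_subset_left).exists_isGreatest ⟨t, ht, htF⟩

theorem ProperAction.finite_setOf_dist_smul_le [ProperSpace X] (hact : ProperAction Γ X) (o : X)
    (R : ℝ) : {g : Γ | dist o (g • o) ≤ R}.Finite :=
  (hact _ (isCompact_closedBall o R)).subset fun _ hg =>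
    ⟨o, mem_closedBall_self (dist_nonneg.trans hg), by rwa [mem_closedBall, dist_comm]⟩

theorem exists_dist_le_of_mem_cthickening {k : Set X} (hk : IsCompact k) {r : ℝ}
    (hr : 0 ≤ r) {v : X} (hv : v ∈ cthickening r k) : ∃ w ∈ k, dist v w ≤ r := by
  simpa [hk.cthickening_eq_biUnion_closedBall hr] using hv

section IsometricAction

variable [IsIsometricSMul Γ X]

theorem ProperAction.isClosed_iUnion_smul [ProperSpace X] (hact : ProperAction Γ X) {k : Set X}
    (hk : IsCompact k) : IsClosed (⋃ g : Γ, g • k) := by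
  refine LocallyFinite.isClosed_iUnion (fun v => ?_) fun g =>
    (hk.image (continuous_const_smul g)).isClosed
  refine ⟨closedBall v 1, closedBall_mem_nhds v one_pos,
    (hact _ (hk.union (isCompact_closedBall v 1))).subset ?_⟩
  rintro g ⟨_, ⟨z, hz, rfl⟩, hzv⟩
  exact ⟨z, Or.inl hz, Or.inr hzv⟩

theorem dist_smul_le_diam {k : Set X} (hk : Bornology.IsBounded k) {o v : X} (hok : o ∈ k)
    {g : Γ} (hv : v ∈ g • k) : dist v (g • o) ≤ diam k := by
  obtain ⟨w, hw, rfl⟩ := hv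
  rw [dist_smul]
  exact dist_le_diam_of_mem hk hw hok

theorem mem_iUnion_smul_cthickening_iff {k : Set X} (hk : IsCompact k) {r : ℝ} (hr : 0 ≤ r)
    {v : X} : v ∈ ⋃ g : Γ, g • cthickening r k ↔ ∃ g : Γ, ∃ w ∈ k, dist v (g • w) ≤ r := by
  simp only [mem_iUnion, mem_smul_set_iff_inv_smul_mem, hk.cthickening_eq_biUnion_closedBall hr,
    mem_closedBall, exists_prop]
  refine exists_congr fun g => exists_congr fun w => and_congr_right fun _ => ?_
  rw [← dist_smul g, smul_inv_smul]

theorem inv_mul_mem_gammaK {k : Set X} {τ : ℝ → X} {a b : ℝ} (hτ : IsGeodesicOn τ (Icc a b))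
    (hab : a ≤ b) {g₁ g₂ : Γ} (ha : τ a ∈ g₁ • k) (hb : τ b ∈ g₂ • k)
    (havoid : ∀ t ∈ Ioo a b, τ t ∉ ⋃ g : Γ, g • k) : g₁⁻¹ * g₂ ∈ gammaK Γ k := by
  rw [mem_smul_set_iff_inv_smul_mem] at ha hb
  have hend : (g₁⁻¹ * g₂) • g₂⁻¹ • τ b = g₁⁻¹ • τ b := by rw [mul_smul, smul_inv_smul]
  have hlen : dist (g₁⁻¹ • τ a) ((g₁⁻¹ * g₂) • g₂⁻¹ • τ b) = b - a := by
    rw [hend, dist_smul, hτ.dist_eq_sub ⟨le_rfl, hab⟩ ⟨hab, le_rfl⟩ hab]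
  have hmem : ∀ r ∈ Icc 0 (b - a), a + r ∈ Icc a b := fun r hr =>
    ⟨by linarith [hr.1], by linarith [hr.2]⟩
  refine ⟨_, ha, _, hb, fun r => g₁⁻¹ • τ (a + r), by simp, ?_, ?_, ?_⟩ <;> rw [hlen]
  · simp [hend]
  · intro s hs t ht
    simp only [dist_smul, hτ (a + s) (hmem s hs) (a + t) (hmem t ht), add_sub_add_left_eq_sub]
  · rintro v ⟨⟨r, hr, rfl⟩, hv⟩
    rcases eq_or_lt_of_le hr.1 with rfl | hr0
    · exact Or.inl (by simpa using ha)
    rcases eq_or_lt_of_le hr.2 with rfl | hrb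
    · exact Or.inr ⟨_, hb, by simp [hend]⟩
    refine absurd ?_ (havoid (a + r) ⟨by linarith, by linarith⟩)
    obtain ⟨g, hg⟩ := mem_iUnion.1 hv
    rw [← smul_inv_smul g₁ (τ (a + r))]
    exact mem_iUnion.2 ⟨g₁ * g, by rw [mul_smul]; exact smul_mem_smul_set hg⟩

theorem one_mem_gammaK {k : Set X} {o : X} (hok : o ∈ k) : (1 : Γ) ∈ gammaK Γ k := by
  have hconst : IsGeodesicOn (fun _ => o) (Icc 0 0) := fun s hs t ht => by
    rw [Icc_self, mem_singleton_iff] at hs ht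
    simp [hs, ht]
  simpa using inv_mul_mem_gammaK (g₁ := (1 : Γ)) (g₂ := 1) hconst le_rfl (by simpa) (by simpa)
    (by simp)

theorem exists_inv_mul_mem_gammaK_of_gap {k : Set X} (hU : IsClosed (⋃ g : Γ, g • k))
    {τ : ℝ → X} {T a b : ℝ} (hτ : IsGeodesicOn τ (Icc 0 T)) (ha : 0 ≤ a) (hab : a ≤ b)
    (hb : b ≤ T) (h0 : τ 0 ∈ k) (hT : τ T ∈ ⋃ g : Γ, g • k)
    (hgap : ∀ r ∈ Icc 0 T, τ r ∈ ⋃ g : Γ, g • k → r ≤ a ∨ b ≤ r) :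
    ∃ t₂ ∈ Icc 0 a, ∃ t₃ ∈ Icc b T, ∃ g₁ g₂ : Γ,
      τ t₂ ∈ g₁ • k ∧ τ t₃ ∈ g₂ • k ∧ g₁⁻¹ * g₂ ∈ gammaK Γ k := by
  obtain ⟨t₂, ⟨ht₂, hU₂⟩, hmax⟩ :=
    exists_isGreatest_hitting (hτ.continuousOn.mono (Icc_subset_Icc le_rfl (hab.trans hb))) hU
      ⟨le_rfl, ha⟩ (mem_iUnion.2 ⟨1, by rwa [one_smul]⟩)
  obtain ⟨t₃, ⟨ht₃, hU₃⟩, hmin⟩ :=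
    exists_isLeast_hitting (hτ.continuousOn.mono (Icc_subset_Icc (ha.trans hab) le_rfl)) hU
      ⟨hb, le_rfl⟩ hT
  obtain ⟨g₁, hg₁⟩ := mem_iUnion.1 hU₂
  obtain ⟨g₂, hg₂⟩ := mem_iUnion.1 hU₃
  refine ⟨t₂, ht₂, t₃, ht₃, g₁, g₂, hg₁, hg₂, inv_mul_mem_gammaK
    (hτ.mono (Icc_subset_Icc ht₂.1 ht₃.2)) (by linarith [ht₂.2, ht₃.1]) hg₁ hg₂ ?_⟩
  intro r hr hrU
  rcases hgap r ⟨ht₂.1.trans hr.1.le, hr.2.le.trans ht₃.2⟩ hrU with hra | hbr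
  · exact (hmax ⟨⟨ht₂.1.trans hr.1.le, hra⟩, hrU⟩).not_gt hr.1
  · exact (hmin ⟨⟨hbr, hr.2.le.trans ht₃.2⟩, hrU⟩).not_gt hr.2

theorem exists_mem_mul_gammaK_near_of_gap [ProperSpace X] (hgeo : GeodesicSpace X)
    (hact : ProperAction Γ X) {k : Set X} (hk : IsCompact k) {o : X} (hok : o ∈ k) {x₀ : X}
    (hx₀ : x₀ ∈ k) {α : Γ} {z₀ : X} (hz₀ : z₀ ∈ k) {a b : ℝ} (ha : 0 ≤ a) (hb : 0 ≤ b)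
    (hgap : ∀ w ∈ ⋃ g : Γ, g • k, gromovProd x₀ (α • z₀) w = 0 → a < dist x₀ w →
      b < dist w (α • z₀) → False) :
    ∃ β ∈ {g : Γ | dist o (g • o) ≤ a + b + 3 * diam k} * gammaK Γ k,
      dist (α • z₀) (β • o) ≤ b + diam k := by
  have hdiam : ∀ {g : Γ} {v : X}, v ∈ g • k → dist v (g • o) ≤ diam k :=
    dist_smul_le_diam hk.isBounded hok
  have hox₀ : dist o x₀ ≤ diam k := dist_le_diam_of_mem hk.isBounded hok hx₀
  set T := dist x₀ (α • z₀)
  by_cases hT : T ≤ a + b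
  · refine ⟨α, ⟨α, ?_, 1, one_mem_gammaK hok, mul_one α⟩, ?_⟩
    · show dist o (α • o) ≤ _
      linarith [dist_triangle4 o x₀ (α • z₀) (α • o), hdiam (smul_mem_smul_set (a := α) hz₀),
        diam_nonneg (s := k)]
    · linarith [hdiam (smul_mem_smul_set (a := α) hz₀)]
  rw [not_le] at hT
  obtain ⟨τ, hτ0, hτT, hτ⟩ := hgeo x₀ (α • z₀)
  have hT0 : 0 ≤ T := dist_nonneg
  have hdist0 : ∀ r ∈ Icc 0 T, dist x₀ (τ r) = r := fun r hr => by
    rw [← hτ0, hτ.dist_eq_sub ⟨le_rfl, hT0⟩ hr hr.1, sub_zero]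
  have hdistT : ∀ r ∈ Icc 0 T, dist (τ r) (α • z₀) = T - r := fun r hr => by
    rw [← hτT, hτ.dist_eq_sub hr ⟨hT0, le_rfl⟩ hr.2]
  have hgap' : ∀ r ∈ Icc 0 T, τ r ∈ ⋃ g : Γ, g • k → r ≤ a ∨ T - b ≤ r := by
    intro r hr hrU
    by_contra! h
    refine hgap _ hrU ?_ (by rw [hdist0 r hr]; exact h.1) (by rw [hdistT r hr]; linarith [h.2])
    rw [← hτ0, ← hτT]
    exact hτ.gromovProd_eq_zero ⟨le_rfl, hT0⟩ hr ⟨hT0, le_rfl⟩ hr.1 hr.2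
  obtain ⟨t₂, ht₂, t₃, ht₃, g₁, g₂, hg₁, hg₂, hg⟩ :=
    exists_inv_mul_mem_gammaK_of_gap (hact.isClosed_iUnion_smul hk) hτ ha (by linarith)
      (by linarith) (by rwa [hτ0]) (by rw [hτT]; exact mem_iUnion.2 ⟨α, smul_mem_smul_set hz₀⟩)
      hgap'
  refine ⟨g₂, ⟨g₁, ?_, g₁⁻¹ * g₂, hg, mul_inv_cancel_left g₁ g₂⟩, ?_⟩
  · show dist o (g₁ • o) ≤ _
    linarith [dist_triangle4 o x₀ (τ t₂) (g₁ • o), hdiam hg₁, ht₂.2, diam_nonneg (s := k),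
      hdist0 t₂ ⟨ht₂.1, by linarith [ht₂.2]⟩]
  · linarith [dist_triangle (α • z₀) (τ t₃) (g₂ • o), hdiam hg₂, ht₃.1,
      dist_comm (τ t₃) (α • z₀), hdistT t₃ ⟨by linarith [ht₃.1], ht₃.2⟩]

theorem exists_dist_le_of_gromovProd_le {δ : ℝ} (hhyp : GromovHyperbolicWith δ X) {k : Set X}
    (hk : IsCompact k) {c : ℝ → X} {n : ℝ} (hc : IsGeodesicOn c (Icc 0 n)) (hn : 0 ≤ n)
    (hcK : c '' Icc 0 n ∩ ⋃ g : Γ, g • cthickening (6 * δ) k ⊆ cthickening (6 * δ) k)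
    {g : Γ} {w : X} (hw : w ∈ k) (hcw : gromovProd (c 0) (c n) (g • w) ≤ 4 * δ) :
    ∃ v ∈ k, dist (g • w) v ≤ 12 * δ := by
  have hδ := hhyp.nonneg w
  set s := gromovProd (c n) (g • w) (c 0)
  have hs : s ∈ Icc 0 n := ⟨gromovProd_nonneg _ _ _, (gromovProd_le_dist_left _ _ _).trans_eq
    (by rw [dist_comm, hc.dist_eq_sub ⟨le_rfl, hn⟩ ⟨hn, le_rfl⟩ hn, sub_zero])⟩
  have hwc : dist (g • w) (c s) ≤ 6 * δ := by
    linarith [hhyp.dist_gromovProd_le hc hn (g • w)]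
  obtain ⟨v, hv, hcv⟩ := exists_dist_le_of_mem_cthickening hk (by linarith) <| hcK
    ⟨mem_image_of_mem c hs,
      (mem_iUnion_smul_cthickening_iff hk (by linarith)).2 ⟨g, w, hw, by rwa [dist_comm]⟩⟩
  exact ⟨v, hv, by linarith [dist_triangle (g • w) (c s) v]⟩

theorem false_of_mem_orbit_between {δ : ℝ} (hhyp : GromovHyperbolicWith δ X) {k : Set X}
    (hk : IsCompact k) {x x₀ : X} (hx₀ : x₀ ∈ k) (hxx₀ : dist x x₀ ≤ 6 * δ)
    {c : ℝ → X} {n : ℝ} (hc : IsGeodesicOn c (Icc 0 n)) (hc0 : c 0 = x) (hn : 0 ≤ n)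
    (hcK : c '' Icc 0 n ∩ ⋃ g : Γ, g • cthickening (6 * δ) k ⊆ cthickening (6 * δ) k)
    {σ : ℝ → X} {d t₁ : ℝ} (hσ : IsGeodesicOn σ (Icc 0 d)) (hσ0 : σ 0 = x) (ht₁ : t₁ ∈ Icc 0 d)
    (hmin : ∀ s ∈ Icc 0 t₁, gromovProd (c n) (σ d) x - 10 * δ ≤ s →
      σ s ∈ ⋃ g : Γ, g • cthickening (4 * δ) k → t₁ ≤ s)
    {q' w : X} (hq' : dist (σ t₁) q' ≤ 4 * δ) (hw : w ∈ ⋃ g : Γ, g • k)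
    (hw0 : gromovProd x₀ q' w = 0) (hx₀w : 12 * δ + diam k < dist x₀ w)
    (hwq' : 16 * δ < dist w q') : False := by
  have hδ := hhyp.nonneg x
  obtain ⟨g, w', hw', rfl⟩ : ∃ g : Γ, ∃ w' ∈ k, g • w' = w := by
    simpa only [mem_iUnion, mem_smul_set] using hw
  set w := g • w'
  set q := σ t₁
  have hxqw : gromovProd x q w ≤ 2 * δ := hhyp.gromovProd_le_of_near_ends hw0
    (by linarith [dist_comm x x₀, diam_nonneg (s := k)])
    (by linarith [dist_comm q q', dist_comm w q'])
  have h0 : (0 : ℝ) ∈ Icc 0 d := ⟨le_rfl, ht₁.1.trans ht₁.2⟩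
  set s := gromovProd q w x
  have hs : s ∈ Icc 0 t₁ := ⟨gromovProd_nonneg _ _ _, (gromovProd_le_dist_left _ _ _).trans_eq
    (by rw [← hσ0, dist_comm, hσ.dist_eq_sub h0 ht₁ ht₁.1, sub_zero])⟩
  have hsd : s ∈ Icc 0 d := ⟨hs.1, hs.2.trans ht₁.2⟩
  have hws : dist w (σ s) ≤ 4 * δ := by
    have := hhyp.dist_gromovProd_le (hσ.mono (Icc_subset_Icc le_rfl ht₁.2)) ht₁.1 w
    rw [hσ0] at this
    linarith
  have hst : 8 * δ < t₁ - s := by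
    by_contra! h
    linarith [dist_triangle4 w (σ s) q q', hσ.dist_eq_sub hsd ht₁ hs.2]
  have hsL : s + 10 * δ < gromovProd (c n) (σ d) x := by
    by_contra! h
    have hsU : σ s ∈ ⋃ g : Γ, g • cthickening (4 * δ) k :=
      (mem_iUnion_smul_cthickening_iff hk (by linarith)).2 ⟨g, w', hw', by rwa [dist_comm]⟩
    linarith [hmin s hs (by linarith) hsU]
  have hxzw : gromovProd x (c n) w ≤ 4 * δ := by
    have h1 := gromovProd_ge (c n) (σ d) x w
    have h2 := gromovProd_ge q (σ d) (σ s) w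
    rw [hσ.gromovProd_eq_sub hsd ht₁ ⟨ht₁.1.trans ht₁.2, le_rfl⟩ hs.2 ht₁.2] at h2
    have h3 : dist x (σ s) = s := by rw [← hσ0, hσ.dist_eq_sub h0 hsd hs.1, sub_zero]
    rcases hhyp.gromovProd_chain x (c n) (σ d) q w with h | h | h <;>
      linarith [dist_triangle x (σ s) w, dist_comm w (σ s), gromovProd_comm (σ d) q w]
  obtain ⟨v, hv, hwv⟩ := exists_dist_le_of_gromovProd_le hhyp hk hc hn hcK hw' (by rwa [hc0])
  linarith [dist_triangle x₀ v w, dist_le_diam_of_mem hk.isBounded hx₀ hv, dist_comm w v]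

theorem exists_mem_mul_gammaK_near_geodesic [ProperSpace X] {δ : ℝ}
    (hhyp : GromovHyperbolicWith δ X) (hgeo : GeodesicSpace X) (hact : ProperAction Γ X)
    {k : Set X} (hk : IsCompact k) {o : X} (hok : o ∈ k) {x : X}
    (hx : x ∈ cthickening (6 * δ) k) {c : ℝ → X} {n : ℝ} (hc : IsGeodesicOn c (Icc 0 n))
    (hc0 : c 0 = x) (hn : 0 ≤ n)
    (hcK : c '' Icc 0 n ∩ ⋃ g : Γ, g • cthickening (6 * δ) k ⊆ cthickening (6 * δ) k) (γ : Γ) :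
    ∃ β ∈ {g : Γ | dist o (g • o) ≤ 28 * δ + 4 * diam k} * gammaK Γ k,
      gromovProd x (γ • o) (β • o) ≤ 20 * δ + diam k ∧
      gromovProd (c n) (γ • o) x ≤ dist x (β • o) + 30 * δ + diam k ∧
      ∀ z, gromovProd z (γ • o) x ≤ gromovProd (c n) (γ • o) x + 2 →
        gromovProd z (γ • o) (β • o) ≤ 31 * δ + diam k + 2 := by
  have hδ := hhyp.nonneg o
  obtain ⟨x₀, hx₀, hxx₀⟩ := exists_dist_le_of_mem_cthickening hk (by linarith) hx
  obtain ⟨σ, hσ0, hσd, hσ⟩ := hgeo x (γ • o)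
  set d := dist x (γ • o)
  set L := gromovProd (c n) (γ • o) x
  have hLd : L ≤ d := (gromovProd_le_dist_right _ _ _).trans_eq (dist_comm _ _)
  have hyU : σ d ∈ ⋃ g : Γ, g • cthickening (4 * δ) k := by
    rw [hσd]; exact mem_iUnion.2 ⟨γ, smul_mem_smul_set (self_subset_cthickening k hok)⟩
  obtain ⟨t₁, ⟨ht₁, hq⟩, hmin⟩ :=
    exists_isLeast_hitting
      (hσ.continuousOn.mono (Icc_subset_Icc (le_max_left 0 (L - 10 * δ)) le_rfl))
      (hact.isClosed_iUnion_smul hk.cthickening) ⟨max_le dist_nonneg (by linarith), le_rfl⟩ hyU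
  have ht₁' : t₁ ∈ Icc 0 d := ⟨(le_max_left _ _).trans ht₁.1, ht₁.2⟩
  set q := σ t₁
  obtain ⟨α, z₀, hz₀, hqz₀⟩ := (mem_iUnion_smul_cthickening_iff hk (by linarith)).1 hq
  have h0 : (0 : ℝ) ∈ Icc 0 d := ⟨le_rfl, ht₁'.1.trans ht₁'.2⟩
  have hxq : dist x q = t₁ := by rw [← hσ0, hσ.dist_eq_sub h0 ht₁' ht₁'.1, sub_zero]
  have hq0 : gromovProd x (γ • o) q = 0 := by
    rw [← hσ0, ← hσd]
    exact hσ.gromovProd_eq_zero h0 ht₁' ⟨h0.2, le_rfl⟩ ht₁'.1 ht₁'.2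
  obtain ⟨β, hβ, hqβ⟩ := exists_mem_mul_gammaK_near_of_gap hgeo hact hk hok hx₀ hz₀
    (a := 12 * δ + diam k) (b := 16 * δ) (by linarith [diam_nonneg (s := k)]) (by linarith)
    fun w hw hw0 hx₀w hwq' => false_of_mem_orbit_between hhyp hk hx₀ hxx₀ hc hc0 hn hcK hσ hσ0 ht₁'
      (fun s hs hLs hsU => hmin ⟨⟨max_le hs.1 (by rwa [hσd] at hLs), hs.2.trans ht₁'.2⟩, hsU⟩)
      hqz₀ hw hw0 hx₀w hwq'
  have hqβ' : dist q (β • o) ≤ 20 * δ + diam k := by linarith [dist_triangle q (α • z₀) (β • o)]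
  refine ⟨β, Set.mul_subset_mul_right (fun g (hg : dist o (g • o) ≤ _) =>
    (show dist o (g • o) ≤ 28 * δ + 4 * diam k by linarith)) hβ, ?_, ?_, ?_⟩
  · linarith [gromovProd_ge x (γ • o) (β • o) q, dist_comm q (β • o)]
  · linarith [dist_triangle x (β • o) q, dist_comm q (β • o), ht₁.1, le_max_right 0 (L - 10 * δ)]
  · intro z hz
    have h := hhyp.gromovProd_le_of_gromovProd_eq_zero hq0 z
    have hmax : max (gromovProd z (γ • o) x - dist x q) 0 ≤ 10 * δ + 2 :=
      max_le (by linarith [ht₁.1, le_max_right 0 (L - 10 * δ)]) (by linarith)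
    linarith [gromovProd_ge z (γ • o) (β • o) q, dist_comm q (β • o)]

end IsometricAction

section Bordification

variable {o : X} {c : ℝ → X} {I : Set ℝ} {x : X} {p : Bord o}

theorem JoinsBord.map_zero (h : JoinsBord o c I x p) : c 0 = x := by
  rcases h with ⟨_, _, _, h0, _⟩ | ⟨_, _, _, h0, _⟩ <;> exact h0

theorem JoinsBord.isGeodesicOn (h : JoinsBord o c I x p) : IsGeodesicOn c I := by
  rcases h with ⟨_, _, _, _, _, hc⟩ | ⟨_, _, rfl, _, hc, _⟩ <;> exact hc

theorem gpPB_le_of_frequently {base : X} {ξ : GromovBoundary o} (hξ : endsAt o c ξ) {b : ℝ}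
    (hb : ∃ᶠ m : ℕ in atTop, gromovProd x (c m) base ≤ b) : gpPB o base x ξ ≤ b := by
  obtain ⟨hseq, rfl⟩ := hξ
  refine le_trans (csInf_le ?_ ⟨_, rfl, rfl⟩) (liminf_le_of_frequently_le hb
    (isBoundedUnder_of_eventually_ge (Eventually.of_forall fun _ => gromovProd_nonneg _ _ _)))
  refine ⟨0, ?_⟩
  rintro t ⟨u, -, rfl⟩
  exact le_liminf_of_le (isCoboundedUnder_ge_of_le atTop fun _ => gromovProd_le_dist_left _ _ _)
    (Eventually.of_forall fun _ => gromovProd_nonneg _ _ _)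

/-- For a ray, `c n` is taken with `⟨c n, y⟩_x` within `1` of the liminf defining `⟨p, y⟩_x`,
so that the infinitely many `c m` with `⟨c m, y⟩_x` below that liminf plus `1` qualify as `z`. -/
theorem JoinsBord.exists_gpE_le (h : JoinsBord o c I x p) (y : X) :
    ∃ n, 0 ≤ n ∧ Icc 0 n ⊆ I ∧ ∀ base B,
      (∀ z, gromovProd z y x ≤ gromovProd (c n) y x + 2 → gromovProd z y base ≤ B) →
        gpE o base p (Bord.ofX o y) ≤ B := by
  rcases h with ⟨y', rfl, rfl, -, hcy, -⟩ | ⟨ξ, rfl, rfl, -, -, hξ⟩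
  · refine ⟨dist x y', dist_nonneg, subset_rfl, fun base B hB => ?_⟩
    rw [hcy] at hB
    exact EReal.coe_le_coe_iff.2 (hB y' (by linarith))
  · set f : ℕ → ℝ := fun m => gromovProd (c m) y x
    have hf0 : ∀ m, 0 ≤ f m := fun m => gromovProd_nonneg _ _ _
    have hf : ∀ m, f m ≤ dist y x := fun m => gromovProd_le_dist_right _ _ _
    obtain ⟨m₀, hm₀⟩ := (eventually_lt_of_lt_liminf (sub_one_lt (liminf f atTop))
      (isBoundedUnder_of_eventually_ge (Eventually.of_forall hf0))).exists
    refine ⟨m₀, m₀.cast_nonneg, fun t ht => ht.1, fun base B hB =>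
      EReal.coe_le_coe_iff.2 (gpPB_le_of_frequently hξ ?_)⟩
    refine (frequently_lt_of_liminf_lt (isCoboundedUnder_ge_of_le atTop hf)
      (lt_add_one _)).mono fun m hm => ?_
    rw [gromovProd_comm]
    exact hB _ (by linarith)

end Bordification

theorem thickening_lemma_general
    {X : Type} [MetricSpace X] [ProperSpace X]
    {Γ : Type} [Group Γ] [MulAction Γ X] [IsIsometricSMul Γ X]
    (δ : ℝ) (hhyp : GromovHyperbolicWith δ X) (hgeo : GeodesicSpace X)
    (hact : ProperAction Γ X) (o : X)
    (k : Set X) (hk : IsCompact k) (hok : o ∈ k)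
    (K : Set X) (hKdef : K = {z : X | ∃ w ∈ k, dist z w ≤ 6 * δ}) :
    ∃ (S : Finset Γ) (r₀ : ℝ), 0 < r₀ ∧
      ∀ x ∈ K, ∀ (p : Bord o) (c : ℝ → X) (I : Set ℝ),
        JoinsBord o c I x p →
        ((c '' I) ∩ (⋃ g : Γ, g • K) ⊆ K) →
        ∀ γ : Γ, ∃ β : Γ,
          (∃ s ∈ S, ∃ g ∈ gammaK Γ k, β = s * g) ∧
          gromovProd x (γ • o) (β • o) ≤ r₀ ∧
          gpE o (β • o) p (Bord.ofX o (γ • o)) ≤ (r₀ : EReal) ∧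
          gpE o x p (Bord.ofX o (γ • o)) ≤ ((dist x (β • o) + r₀ : ℝ) : EReal) := by
  have hδ := hhyp.nonneg o
  obtain rfl : K = cthickening (6 * δ) k := by
    rw [hKdef, hk.cthickening_eq_biUnion_closedBall (by linarith)]
    ext z
    simp
  refine ⟨(hact.finite_setOf_dist_smul_le o (28 * δ + 4 * diam k)).toFinset, 31 * δ + diam k + 2,
    by linarith [diam_nonneg (s := k)], ?_⟩
  intro x hx p c I hJ hcK γ
  obtain ⟨n, hn, hnI, hgpE⟩ := hJ.exists_gpE_le (γ • o)
  obtain ⟨β, ⟨s, hs, g, hg, rfl⟩, h₁, h₂, h₃⟩ := exists_mem_mul_gammaK_near_geodesic hhyp hgeo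
    hact hk hok hx (hJ.isGeodesicOn.mono hnI) hJ.map_zero hn
    ((inter_subset_inter_left _ (image_mono hnI)).trans hcK) γ
  refine ⟨s * g, ⟨s, by simpa using hs, g, hg, rfl⟩, by linarith,
    hgpE _ _ fun z hz => (h₃ z hz).trans (by linarith), hgpE _ _ fun z hz => by linarith⟩

/-- thickening lemma. Let `X` be a proper geodesic `δ`-hyperbolic
space, `Γ` a group acting properly by isometries on `X` with basepoint `o`,
`k ⊆ X` a compact set containing `o`, and `K` the closed `6δ`-neighbourhood of
`k`. Then there exist a finite subset `S ⊆ Γ` and `r₀ > 0` such that: for every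
`x ∈ K`, every `y ∈ X ∪ ∂X`, every geodesic `c` from `x` to `y` with
`c ∩ Γ·K ⊆ K`, and every `γ ∈ Γ`, there exists `β ∈ S·Γ_k` with
`⟨x,γo⟩_{βo} ≤ r₀`, `⟨y,γo⟩_{βo} ≤ r₀` and `d(x,βo) ≥ ⟨y,γo⟩_x - r₀`. -/
theorem thickening_lemma
    {X : Type} [MetricSpace X] [ProperSpace X]
    {Γ : Type} [Group Γ] [MulAction Γ X] [IsIsometricSMul Γ X]
    (δ : ℝ) (hδ : 0 < δ) (hhyp : GromovHyperbolicWith δ X) (hgeo : GeodesicSpace X)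
    (hact : ProperAction Γ X) (o : X)
    (k : Set X) (hk : IsCompact k) (hok : o ∈ k)
    (K : Set X) (hKdef : K = {z : X | ∃ w ∈ k, dist z w ≤ 6 * δ}) :
    ∃ (S : Finset Γ) (r₀ : ℝ), 0 < r₀ ∧
      ∀ x ∈ K, ∀ (p : Bord o) (c : ℝ → X) (I : Set ℝ),
        JoinsBord o c I x p →
        ((c '' I) ∩ (⋃ g : Γ, g • K) ⊆ K) →
        ∀ γ : Γ, ∃ β : Γ,
          (∃ s ∈ S, ∃ g ∈ gammaK Γ k, β = s * g) ∧
          gromovProd x (γ • o) (β • o) ≤ r₀ ∧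
          gpE o (β • o) p (Bord.ofX o (γ • o)) ≤ (r₀ : EReal) ∧
          gpE o x p (Bord.ofX o (γ • o)) ≤ ((dist x (β • o) + r₀ : ℝ) : EReal) :=
  thickening_lemma_general δ hhyp hgeo hact o k hk hok K hKdef

end SPR
end
end

section
/- Let Γ be a countable group acting on the right on a countable set Y, let p : Γ → [0,1] be a symmetric (p(γ) = p(γ⁻¹) for all γ) probability measure with finite support, and define the Markov operator M on nonnegative functions Y → [0,∞) by (Mφ)(y) = Σ_{γ∈Γ} p(γ)·φ(yγ⁻¹). Then for all nonnegative functions u, φ : Y → [0,∞), one has Σ_{y∈Y} M(uφ)(y)·u(y)·φ(y) ≤ Σ_{y∈Y} u(y)²·φ(y)·(Mφ)(y), as an inequality in [0,∞]. -/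
open Filter Topology Metric Set MeasureTheory Pointwise
open scoped symmDiff ENNReal NNReal

noncomputable section

namespace ENNReal

theorem two_mul_le_add_sq (a b : ℝ≥0∞) : 2 * a * b ≤ a ^ 2 + b ^ 2 := by
  rcases eq_or_ne a ⊤ with rfl | ha
  · simp
  rcases eq_or_ne b ⊤ with rfl | hb
  · simp
  lift a to ℝ≥0 using ha
  lift b to ℝ≥0 using hb
  exact_mod_cast _root_.two_mul_le_add_sq a b

/-- Barta's trick: AM-GM on each pair `{a, e a}`, which carries a single weight `c`, then
reindexing by `e`. -/
theorem tsum_mul_mul_comp_le_tsum_mul_sq {α : Type*} (e : α ≃ α) (c s : α → ℝ≥0∞)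
    (hc : ∀ a, c (e a) = c a) :
    ∑' a, c a * (s a * s (e a)) ≤ ∑' a, c a * s a ^ 2 := by
  have amgm : ∀ a, 2 * (c a * (s a * s (e a))) ≤ c a * s a ^ 2 + c (e a) * s (e a) ^ 2 := by
    intro a
    calc 2 * (c a * (s a * s (e a))) = c a * (2 * s a * s (e a)) := by ring
      _ ≤ c a * (s a ^ 2 + s (e a) ^ 2) := by gcongr; exact two_mul_le_add_sq _ _
      _ = c a * s a ^ 2 + c (e a) * s (e a) ^ 2 := by rw [hc]; ring
  refine (ENNReal.mul_le_mul_iff_right two_ne_zero ofNat_ne_top).mp ?_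
  calc 2 * ∑' a, c a * (s a * s (e a)) = ∑' a, 2 * (c a * (s a * s (e a))) :=
        ENNReal.tsum_mul_left.symm
    _ ≤ ∑' a, (c a * s a ^ 2 + c (e a) * s (e a) ^ 2) := ENNReal.tsum_le_tsum amgm
    _ = 2 * ∑' a, c a * s a ^ 2 := by
      rw [ENNReal.tsum_add, e.tsum_eq fun a => c a * s a ^ 2, two_mul]

end ENNReal

namespace SPR

theorem act_inv_involutive {Γ Y : Type*} [Group Γ] (act : Y → Γ → Y)
    (hact_one : ∀ y : Y, act y 1 = y)
    (hact_mul : ∀ (y : Y) (γ₁ γ₂ : Γ), act y (γ₁ * γ₂) = act (act y γ₁) γ₂) :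
    Function.Involutive fun q : Y × Γ => (act q.1 q.2⁻¹, q.2⁻¹) := by
  rintro ⟨y, γ⟩
  simp [← hact_mul, hact_one]

theorem markov_barta_trick_general
    {Γ Y : Type} [Group Γ]
    (act : Y → Γ → Y)
    (hact_one : ∀ y : Y, act y 1 = y)
    (hact_mul : ∀ (y : Y) (γ₁ γ₂ : Γ), act y (γ₁ * γ₂) = act (act y γ₁) γ₂)
    (p : Γ → ℝ≥0) (hpsymm : ∀ γ : Γ, p γ⁻¹ = p γ)
    (u φ : Y → ℝ≥0) :
    ∑' y : Y,
        (∑' γ : Γ, (p γ : ℝ≥0∞) * ((u (act y γ⁻¹) : ℝ≥0∞) * (φ (act y γ⁻¹) : ℝ≥0∞)))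
          * (u y : ℝ≥0∞) * (φ y : ℝ≥0∞)
      ≤ ∑' y : Y, (u y : ℝ≥0∞) ^ 2 * (φ y : ℝ≥0∞) *
          (∑' γ : Γ, (p γ : ℝ≥0∞) * (φ (act y γ⁻¹) : ℝ≥0∞)) := by
  let e := (act_inv_involutive act hact_one hact_mul).toPerm
  let c : Y × Γ → ℝ≥0∞ := fun q => p q.2 * φ q.1 * φ (act q.1 q.2⁻¹)
  have hc : ∀ q, c (e q) = c q := by
    rintro ⟨y, γ⟩
    simp only [c, e, Function.Involutive.coe_toPerm, hpsymm, inv_inv, ← hact_mul,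
      inv_mul_cancel, hact_one]
    ring
  calc _ = ∑' y, ∑' γ, c (y, γ) * (u y * u (act y γ⁻¹) : ℝ≥0∞) := tsum_congr fun y => by
          rw [← ENNReal.tsum_mul_right, ← ENNReal.tsum_mul_right]
          exact tsum_congr fun γ => by ring
    _ ≤ ∑' y, ∑' γ, c (y, γ) * (u y : ℝ≥0∞) ^ 2 := by
      rw [← ENNReal.tsum_prod, ← ENNReal.tsum_prod]
      exact ENNReal.tsum_mul_mul_comp_le_tsum_mul_sq e c (fun q => u q.1) hc
    _ = _ := tsum_congr fun y => by
      rw [← ENNReal.tsum_mul_left]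
      exact tsum_congr fun γ => by ring

/-- Let `Γ` act on the right on a countable set `Y`, let `p` be
a symmetric finitely supported probability measure on `Γ`, and `M` the Markov
operator `(Mφ)(y) = Σ_γ p(γ)·φ(yγ⁻¹)`. Then for all nonnegative `u, φ : Y → [0,∞)`,
`Σ_y M(uφ)(y)·u(y)·φ(y) ≤ Σ_y u(y)²·φ(y)·(Mφ)(y)`, as an inequality in `[0,∞]`. -/
theorem markov_barta_trick
    {Γ Y : Type} [Group Γ] [Countable Γ] [Countable Y]
    (act : Y → Γ → Y)
    (hact_one : ∀ y : Y, act y 1 = y)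
    (hact_mul : ∀ (y : Y) (γ₁ γ₂ : Γ), act y (γ₁ * γ₂) = act (act y γ₁) γ₂)
    (p : Γ → ℝ≥0) (hple : ∀ γ : Γ, p γ ≤ 1) (hpsymm : ∀ γ : Γ, p γ⁻¹ = p γ)
    (hpfin : {γ : Γ | p γ ≠ 0}.Finite) (hpsum : HasSum p 1)
    (u φ : Y → ℝ≥0) :
    ∑' y : Y,
        (∑' γ : Γ, (p γ : ℝ≥0∞) * ((u (act y γ⁻¹) : ℝ≥0∞) * (φ (act y γ⁻¹) : ℝ≥0∞)))
          * (u y : ℝ≥0∞) * (φ y : ℝ≥0∞)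
      ≤ ∑' y : Y, (u y : ℝ≥0∞) ^ 2 * (φ y : ℝ≥0∞) *
          (∑' γ : Γ, (p γ : ℝ≥0∞) * (φ (act y γ⁻¹) : ℝ≥0∞)) :=
  markov_barta_trick_general act hact_one hact_mul p hpsymm u φ

end SPR
end
end
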